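/- Let X ⊆ ℐ be nonempty with Supp(∧X) > 0. Then Supp(∧ f_bond(X)) = Supp(∧X), Supp(∨ f_bond(X)) = Supp(∨X), and bond(f_bond(X)) = bond(X); moreover f_bond(X) is the largest superset of X having the same bond value: every Y with X ⊆ Y ⊆ ℐ and bond(Y) = bond(X) satisfies Y ⊆ f_bond(X). -/

import Mathlib

open Finset

variable {τ ι : Type*} [DecidableEq ι]

/-- Conjunctive support: number of transactions containing the whole pattern. -/
def suppConj (T : Finset τ) (items : τ → Finset ι) (X : Finset ι) : ℕ :=
  (T.filter fun t => X ⊆ items t).card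

/-- Disjunctive support: number of transactions containing at least one item of the pattern. -/
def suppDisj (T : Finset τ) (items : τ → Finset ι) (X : Finset ι) : ℕ :=
  (T.filter fun t => (X ∩ items t).Nonempty).card

/-- The bond measure (division by zero in `ℚ` yields `0`, matching the convention). -/
def bond (T : Finset τ) (items : τ → Finset ι) (X : Finset ι) : ℚ :=
  (suppConj T items X : ℚ) / (suppDisj T items X : ℚ)

/-- The closure operator associated with the bond measure:
`f_bond(X) = X ∪ {i ∈ ℐ \ X : bond (X ∪ {i}) = bond X}`. -/
def fbond (T : Finset τ) (items : τ → Finset ι) (I : Finset ι) (X : Finset ι) : Finset ι :=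
  X ∪ (I \ X).filter fun i => bond T items (insert i X) = bond T items X

/-!
For `X ⊆ Y` the conjunctive support can only drop and the disjunctive support can only grow,
so once `Supp(∧X) > 0` the ratio `bond Y` equals `bond X` exactly when both supports are
unchanged. Each of these two equalities says that no transaction leaves (resp. enters) the
corresponding filter of `T`, and this can be tested one item of `Y` at a time. Hence
`bond Y = bond X` iff `bond (insert i X) = bond X` for every `i ∈ Y`, and `fbond X` collects
precisely the items of `I` with this property.
-/

lemma eq_and_eq_of_div_eq_div {K : Type*} [Field K] [LinearOrder K] [IsStrictOrderedRing K]
    {a a' b b' : K} (ha : a' ≤ a) (hb : b ≤ b') (ha₀ : 0 < a) (hb₀ : 0 < b)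
    (h : a' / b' = a / b) : a' = a ∧ b' = b := by
  have hb'₀ : 0 < b' := hb₀.trans_le hb
  have hnum : a' / b' ≤ a / b' := div_le_div_of_nonneg_right ha hb'₀.le
  have hden : a / b' ≤ a / b := div_le_div_of_nonneg_left ha₀.le hb₀ hb
  have hnum_eq : a' / b' = a / b' := le_antisymm hnum (h ▸ hden)
  have hden_eq : a / b' = a / b := le_antisymm hden (h ▸ hnum)
  rw [div_eq_div_iff hb'₀.ne' hb₀.ne', mul_right_inj' ha₀.ne'] at hden_eq
  exact ⟨(div_left_inj' hb'₀.ne').1 hnum_eq, hden_eq.symm⟩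

lemma Finset.card_filter_eq_card_filter_iff {α : Type*} {s : Finset α} {p q : α → Prop}
    [DecidablePred p] [DecidablePred q] (h : ∀ a ∈ s, p a → q a) :
    #(s.filter p) = #(s.filter q) ↔ ∀ a ∈ s, q a → p a := by
  refine ⟨fun hcard a ha hq => ?_,
    fun h' => congrArg card (filter_congr fun a ha => ⟨h a ha, h' a ha⟩)⟩
  have hmem : a ∈ s.filter q := mem_filter.2 ⟨ha, hq⟩
  rw [← eq_of_subset_of_card_le (monotone_filter_right s h) hcard.ge] at hmem
  exact (mem_filter.1 hmem).2

section Supports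

variable (T : Finset τ) (items : τ → Finset ι) {X Y : Finset ι}

lemma suppConj_anti (h : X ⊆ Y) : suppConj T items Y ≤ suppConj T items X :=
  card_le_card <| monotone_filter_right T fun _ _ hY => h.trans hY

lemma suppDisj_mono (h : X ⊆ Y) : suppDisj T items X ≤ suppDisj T items Y :=
  card_le_card <| monotone_filter_right T fun _ _ hX => hX.mono (inter_subset_inter h subset_rfl)

lemma suppConj_le_suppDisj (hX : X.Nonempty) : suppConj T items X ≤ suppDisj T items X :=
  card_le_card <| monotone_filter_right T fun _ _ hXt => by rwa [inter_eq_left.mpr hXt]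

lemma suppConj_eq_iff (h : X ⊆ Y) :
    suppConj T items Y = suppConj T items X ↔ ∀ t ∈ T, X ⊆ items t → Y ⊆ items t :=
  card_filter_eq_card_filter_iff fun _ _ hY => h.trans hY

lemma suppDisj_eq_iff (h : X ⊆ Y) :
    suppDisj T items Y = suppDisj T items X ↔
      ∀ t ∈ T, (Y ∩ items t).Nonempty → (X ∩ items t).Nonempty := by
  rw [eq_comm]
  exact card_filter_eq_card_filter_iff fun _ _ hX => hX.mono (inter_subset_inter h subset_rfl)

lemma suppConj_eq_iff_forall_insert (h : X ⊆ Y) :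
    suppConj T items Y = suppConj T items X ↔
      ∀ i ∈ Y, suppConj T items (insert i X) = suppConj T items X := by
  simp only [suppConj_eq_iff T items h, suppConj_eq_iff T items (subset_insert _ X),
    insert_subset_iff]
  exact ⟨fun hY i hi t ht hX => ⟨hY t ht hX hi, hX⟩,
    fun hi t ht hX j hj => (hi j hj t ht hX).1⟩

lemma suppDisj_eq_iff_forall_insert (h : X ⊆ Y) :
    suppDisj T items Y = suppDisj T items X ↔
      ∀ i ∈ Y, suppDisj T items (insert i X) = suppDisj T items X := by
  simp only [suppDisj_eq_iff T items h, suppDisj_eq_iff T items (subset_insert _ X)]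
  refine ⟨fun hY i hi t ht hiX => hY t ht (hiX.mono (inter_subset_inter (insert_subset hi h)
    subset_rfl)), fun hi t ht ⟨j, hj⟩ => ?_⟩
  obtain ⟨hjY, hjt⟩ := mem_inter.1 hj
  exact hi j hjY t ht ⟨j, mem_inter.2 ⟨mem_insert_self j X, hjt⟩⟩

lemma bond_eq_iff_supp_eq (h : X ⊆ Y) (hX : X.Nonempty) (hpos : 0 < suppConj T items X) :
    bond T items Y = bond T items X ↔
      suppConj T items Y = suppConj T items X ∧ suppDisj T items Y = suppDisj T items X := by
  refine ⟨fun hb => ?_, fun ⟨hc, hd⟩ => by rw [bond, bond, hc, hd]⟩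
  have hdpos : 0 < suppDisj T items X := hpos.trans_le (suppConj_le_suppDisj T items hX)
  exact_mod_cast eq_and_eq_of_div_eq_div (K := ℚ) (by exact_mod_cast suppConj_anti T items h)
    (by exact_mod_cast suppDisj_mono T items h) (by exact_mod_cast hpos)
    (by exact_mod_cast hdpos) hb

lemma bond_eq_iff_forall_insert (h : X ⊆ Y) (hX : X.Nonempty) (hpos : 0 < suppConj T items X) :
    bond T items Y = bond T items X ↔ ∀ i ∈ Y, bond T items (insert i X) = bond T items X := by
  rw [bond_eq_iff_supp_eq T items h hX hpos, suppConj_eq_iff_forall_insert T items h,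
    suppDisj_eq_iff_forall_insert T items h, ← forall₂_and]
  exact forall₂_congr fun i _ => (bond_eq_iff_supp_eq T items (subset_insert i X) hX hpos).symm

end Supports

section Closure

variable (T : Finset τ) (items : τ → Finset ι) {I X : Finset ι} {i : ι}

lemma bond_insert_eq_of_mem_fbond (hi : i ∈ fbond T items I X) :
    bond T items (insert i X) = bond T items X := by
  rcases mem_union.1 hi with hiX | hiI
  · rw [insert_eq_of_mem hiX]
  · exact (mem_filter.1 hiI).2

lemma mem_fbond_of_bond_insert_eq (hiI : i ∈ I)
    (hb : bond T items (insert i X) = bond T items X) : i ∈ fbond T items I X := by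
  by_cases hiX : i ∈ X
  · exact mem_union_left _ hiX
  · exact mem_union_right _ (mem_filter.2 ⟨mem_sdiff.2 ⟨hiI, hiX⟩, hb⟩)

end Closure

theorem stmt18_general (T : Finset τ) (items : τ → Finset ι) (I : Finset ι)
    (X : Finset ι) (hXne : X.Nonempty)
    (hpos : 0 < suppConj T items X) :
    suppConj T items (fbond T items I X) = suppConj T items X ∧
      suppDisj T items (fbond T items I X) = suppDisj T items X ∧
        bond T items (fbond T items I X) = bond T items X ∧
          ∀ Y : Finset ι, X ⊆ Y → Y ⊆ I → bond T items Y = bond T items X →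
            Y ⊆ fbond T items I X := by
  have hXf : X ⊆ fbond T items I X := subset_union_left
  have hbond : bond T items (fbond T items I X) = bond T items X :=
    (bond_eq_iff_forall_insert T items hXf hXne hpos).2 fun _ hi =>
      bond_insert_eq_of_mem_fbond T items hi
  obtain ⟨hconj, hdisj⟩ := (bond_eq_iff_supp_eq T items hXf hXne hpos).1 hbond
  refine ⟨hconj, hdisj, hbond, fun Y hXY hYI hY i hi => ?_⟩
  exact mem_fbond_of_bond_insert_eq T items (hYI hi)
    ((bond_eq_iff_forall_insert T items hXY hXne hpos).1 hY i hi)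

theorem stmt18 (T : Finset τ) (items : τ → Finset ι) (I : Finset ι)
    (hitems : ∀ t ∈ T, items t ⊆ I)
    (X : Finset ι) (hXI : X ⊆ I) (hXne : X.Nonempty)
    (hpos : 0 < suppConj T items X) :
    suppConj T items (fbond T items I X) = suppConj T items X ∧
      suppDisj T items (fbond T items I X) = suppDisj T items X ∧
        bond T items (fbond T items I X) = bond T items X ∧
          ∀ Y : Finset ι, X ⊆ Y → Y ⊆ I → bond T items Y = bond T items X →
            Y ⊆ fbond T items I X :=
  stmt18_general T items I X hXne hpos
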